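/- Let f be an FIF on SG with vertical scaling factors d₁,d₂,d₃ ∈ (−1,1). Then for every integer m ≥ 1, E_m(f) = (5/3)(d₁² + d₂² + d₃²)·(E_{m−1}(f) − E₀(f)) + E₁(f). -/

import Mathlib

open Finset Filter

noncomputable section

/-- Points in the plane. -/
abbrev Pt := Fin 2 → ℝ

/-- The three contraction maps `P_i(x) = (x + q_i)/2`. -/
def Pmap (q : Fin 3 → Pt) (i : Fin 3) (x : Pt) : Pt := (x + q i) / 2

/-- `Pw q m ω = P_{ω 0} ∘ P_{ω 1} ∘ ⋯ ∘ P_{ω (m-1)}` for a word `ω` of length `m`. -/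
def Pw (q : Fin 3 → Pt) : (m : ℕ) → (Fin m → Fin 3) → Pt → Pt
  | 0, _, x => x
  | m + 1, ω, x => Pmap q (ω 0) (Pw q m (fun k => ω k.succ) x)

/-- The level-`m` vertex set `V_m`. -/
def V (q : Fin 3 → Pt) (m : ℕ) : Set Pt :=
  {x | ∃ ω : Fin m → Fin 3, ∃ i : Fin 3, x = Pw q m ω (q i)}

/-- `V_* = ⋃ m, V_m`. -/
def Vstar (q : Fin 3 → Pt) : Set Pt := ⋃ m, V q m

/-- The Sierpinski gasket, as the closure of `V_*`. -/
def SG (q : Fin 3 → Pt) : Set Pt := closure (Vstar q)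

/-- The level-`m` graph energy. -/
def energy (q : Fin 3 → Pt) (m : ℕ) (u : Pt → ℝ) : ℝ :=
  (5/3 : ℝ)^m * ∑ ω : Fin m → Fin 3,
    ∑ p ∈ Finset.univ.filter (fun p : Fin 3 × Fin 3 => p.1 < p.2),
      (u (Pw q m ω (q p.1)) - u (Pw q m ω (q p.2)))^2

/-- The level-`m` bilinear graph energy. -/
def energyBil (q : Fin 3 → Pt) (m : ℕ) (u v : Pt → ℝ) : ℝ :=
  (5/3 : ℝ)^m * ∑ ω : Fin m → Fin 3,
    ∑ p ∈ Finset.univ.filter (fun p : Fin 3 × Fin 3 => p.1 < p.2),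
      (u (Pw q m ω (q p.1)) - u (Pw q m ω (q p.2))) *
        (v (Pw q m ω (q p.1)) - v (Pw q m ω (q p.2)))

open scoped Classical in
/-- The level-`m` graph Laplacian at `x`. -/
def graphLap (q : Fin 3 → Pt) (m : ℕ) (u : Pt → ℝ) (x : Pt) : ℝ :=
  ∑ ω : Fin m → Fin 3,
    ∑ p ∈ Finset.univ.filter (fun p : Fin 3 × Fin 3 => p.1 ≠ p.2 ∧ Pw q m ω (q p.1) = x),
      (u (Pw q m ω (q p.2)) - u x)

/-- A function is harmonic on `SG` if it is continuous on `SG` and satisfies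
the `1/5-2/5` rule. -/
def IsHarmonic (q : Fin 3 → Pt) (h : Pt → ℝ) : Prop :=
  ContinuousOn h (SG q) ∧
  ∀ (m : ℕ) (ω : Fin m → Fin 3) (i j k : Fin 3), i ≠ j → j ≠ k → i ≠ k →
    h (Pw q m ω (Pmap q i (q j))) =
      2/5 * h (Pw q m ω (q i)) + 2/5 * h (Pw q m ω (q j)) + 1/5 * h (Pw q m ω (q k))

/-- `f` is a fractal interpolation function on `SG` with vertical scaling factors `d i`. -/
def IsFIF (q : Fin 3 → Pt) (d : Fin 3 → ℝ) (f : Pt → ℝ) : Prop :=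
  ContinuousOn f (SG q) ∧
  ∃ h : Fin 3 → Pt → ℝ, (∀ i, IsHarmonic q (h i)) ∧
    ∀ i, ∀ x ∈ SG q, f (Pmap q i x) = d i * f x + h i x

/-!
Splitting words by their first letter gives `E_{n+1}(u) = (5/3) ∑ᵢ E_n(u ∘ Pᵢ)`. For an FIF,
`f ∘ Pᵢ = dᵢ f + hᵢ` on `SG`, so expanding the square yields
`E_{n+1}(f) = (5/3)(∑ dᵢ²) E_n(f) + (5/3) ∑ᵢ (2 dᵢ E_n(f, hᵢ) + E_n(hᵢ))`.
The 1/5–2/5 rule makes every level-`1` cell energy against a harmonic function equal to the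
level-`0` one, so `E_n(u, hᵢ) = E_0(u, hᵢ)` for all `n`: the recursion is affine with a constant
term independent of `n`, and subtracting its instance at `n = 0` eliminates that term.
-/

open Finset

lemma sum_filter_lt_fin_three {M : Type*} [AddCommMonoid M] (g : Fin 3 × Fin 3 → M) :
    ∑ p ∈ univ.filter (fun p : Fin 3 × Fin 3 => p.1 < p.2), g p
      = g (0, 1) + g (0, 2) + g (1, 2) := by
  rw [show univ.filter (fun p : Fin 3 × Fin 3 => p.1 < p.2) = {(0, 1), (0, 2), (1, 2)} by decide,
    sum_insert (by decide), sum_insert (by decide), sum_singleton, add_assoc]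

lemma Fintype.sum_fin_succ_pi {α M : Type*} [Fintype α] [AddCommMonoid M] {n : ℕ}
    (F : (Fin (n + 1) → α) → M) :
    ∑ ω, F ω = ∑ a, ∑ ω : Fin n → α, F (Fin.cons a ω) := by
  rw [← (Fin.consEquiv fun _ => α).sum_comp, Fintype.sum_prod_type]
  rfl

section Gasket

variable (q : Fin 3 → Pt)

lemma Pmap_self (i : Fin 3) : Pmap q i (q i) = q i := by
  funext k; simp only [Pmap, Pi.div_apply, Pi.add_apply, Pi.ofNat_apply]; ring

lemma Pmap_comm (i j : Fin 3) : Pmap q i (q j) = Pmap q j (q i) := by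
  funext k; simp only [Pmap, Pi.div_apply, Pi.add_apply]; ring

lemma Pw_cons (n : ℕ) (i : Fin 3) (ω : Fin n → Fin 3) (x : Pt) :
    Pw q (n + 1) (Fin.cons i ω) x = Pmap q i (Pw q n ω x) := by
  simp only [Pw, Fin.cons_zero, Fin.cons_succ]

lemma Pw_mem_SG (n : ℕ) (ω : Fin n → Fin 3) (i : Fin 3) : Pw q n ω (q i) ∈ SG q :=
  subset_closure (Set.mem_iUnion.2 ⟨n, ω, i, rfl⟩)

lemma energy_eq_energyBil (n : ℕ) (u : Pt → ℝ) : energy q n u = energyBil q n u u := by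
  simp only [energy, energyBil, sq]

lemma energyBil_zero (u v : Pt → ℝ) :
    energyBil q 0 u v = ∑ p ∈ univ.filter (fun p : Fin 3 × Fin 3 => p.1 < p.2),
      (u (q p.1) - u (q p.2)) * (v (q p.1) - v (q p.2)) := by
  rw [energyBil, pow_zero, one_mul]
  exact Fintype.sum_unique _

lemma energyBil_succ (n : ℕ) (u v : Pt → ℝ) :
    energyBil q (n + 1) u v = 5 / 3 * ∑ i, energyBil q n (u ∘ Pmap q i) (v ∘ Pmap q i) := by
  simp only [energyBil, Fintype.sum_fin_succ_pi, Pw_cons, Function.comp_apply, mul_sum, pow_succ',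
    mul_assoc]

lemma energy_succ (n : ℕ) (u : Pt → ℝ) :
    energy q (n + 1) u = 5 / 3 * ∑ i, energy q n (u ∘ Pmap q i) := by
  simp only [energy_eq_energyBil, energyBil_succ]

lemma energy_smul_add (n : ℕ) (a : ℝ) (u v : Pt → ℝ) :
    energy q n (fun x => a * u x + v x)
      = a ^ 2 * energy q n u + 2 * a * energyBil q n u v + energy q n v := by
  simp only [energy, energyBil, mul_sum, ← sum_add_distrib]
  exact sum_congr rfl fun _ _ => sum_congr rfl fun _ _ => by ring

lemma energy_congr_SG {n : ℕ} {u v : Pt → ℝ} (huv : ∀ x ∈ SG q, u x = v x) :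
    energy q n u = energy q n v := by
  simp only [energy, huv _ (Pw_mem_SG q _ _ _)]

/-- The 1/5–2/5 rule without the continuity required by `IsHarmonic`; graph energies see only
vertex values, and this form is visibly stable under `h ↦ h ∘ Pmap q i`. -/
def HarmonicRule (h : Pt → ℝ) : Prop :=
  ∀ (m : ℕ) (ω : Fin m → Fin 3) (i j k : Fin 3), i ≠ j → j ≠ k → i ≠ k →
    h (Pw q m ω (Pmap q i (q j))) =
      2/5 * h (Pw q m ω (q i)) + 2/5 * h (Pw q m ω (q j)) + 1/5 * h (Pw q m ω (q k))

variable {q}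

lemma HarmonicRule.comp_Pmap {h : Pt → ℝ} (hh : HarmonicRule q h) (i : Fin 3) :
    HarmonicRule q (h ∘ Pmap q i) := by
  intro m ω a b c hab hbc hac
  simpa only [Function.comp_apply, Pw_cons] using hh (m + 1) (Fin.cons i ω) a b c hab hbc hac

lemma HarmonicRule.energyBil_one {h : Pt → ℝ} (hh : HarmonicRule q h) (u : Pt → ℝ) :
    energyBil q 1 u h = energyBil q 0 u h := by
  have rule := hh 0 Fin.elim0
  have r01 := rule 0 1 2 (by decide) (by decide) (by decide)
  have r02 := rule 0 2 1 (by decide) (by decide) (by decide)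
  have r10 := rule 1 0 2 (by decide) (by decide) (by decide)
  have r12 := rule 1 2 0 (by decide) (by decide) (by decide)
  have r20 := rule 2 0 1 (by decide) (by decide) (by decide)
  have r21 := rule 2 1 0 (by decide) (by decide) (by decide)
  simp only [Pw] at r01 r02 r10 r12 r20 r21
  simp only [energyBil_succ, Fin.sum_univ_three, energyBil_zero, sum_filter_lt_fin_three,
    Function.comp_apply]
  rw [r01, r02, r10, r12, r20, r21, Pmap_self q 0, Pmap_self q 1, Pmap_self q 2,
    Pmap_comm q 1 0, Pmap_comm q 2 0, Pmap_comm q 2 1]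
  ring

lemma HarmonicRule.energyBil_eq_zero {h : Pt → ℝ} (hh : HarmonicRule q h) (n : ℕ)
    (u : Pt → ℝ) : energyBil q n u h = energyBil q 0 u h := by
  induction n generalizing u h with
  | zero => rfl
  | succ n ih =>
    simp only [energyBil_succ, fun i => ih (hh.comp_Pmap i)]
    rw [← energyBil_succ, hh.energyBil_one]

lemma HarmonicRule.energy_eq_zero {h : Pt → ℝ} (hh : HarmonicRule q h) (n : ℕ) :
    energy q n h = energy q 0 h := by
  rw [energy_eq_energyBil, hh.energyBil_eq_zero, energy_eq_energyBil]

lemma energy_succ_of_selfAffine {d : Fin 3 → ℝ} {f : Pt → ℝ} {h : Fin 3 → Pt → ℝ}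
    (hh : ∀ i, HarmonicRule q (h i))
    (hf : ∀ i, ∀ x ∈ SG q, f (Pmap q i x) = d i * f x + h i x) (n : ℕ) :
    energy q (n + 1) f
      = 5 / 3 * (d 0 ^ 2 + d 1 ^ 2 + d 2 ^ 2) * energy q n f
        + 5 / 3 * ∑ i, (2 * d i * energyBil q 0 f (h i) + energy q 0 (h i)) := by
  have cell : ∀ i, energy q n (f ∘ Pmap q i)
      = d i ^ 2 * energy q n f + (2 * d i * energyBil q 0 f (h i) + energy q 0 (h i)) := by
    intro i
    rw [energy_congr_SG q (u := f ∘ Pmap q i) (hf i), energy_smul_add, (hh i).energyBil_eq_zero,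
      (hh i).energy_eq_zero]
    ring
  simp only [energy_succ, cell, sum_add_distrib, Fin.sum_univ_three]
  ring

end Gasket

theorem stmt_3_general (q : Fin 3 → Pt)
    (d : Fin 3 → ℝ)
    (f : Pt → ℝ) (hf : IsFIF q d f) :
    ∀ m : ℕ, 1 ≤ m →
      energy q m f =
        (5/3) * ((d 0)^2 + (d 1)^2 + (d 2)^2) * (energy q (m-1) f - energy q 0 f)
          + energy q 1 f := by
  obtain ⟨-, h, hh, hfh⟩ := hf
  rintro m hm
  obtain ⟨n, rfl⟩ : ∃ n, m = n + 1 := ⟨m - 1, by omega⟩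
  rw [Nat.add_sub_cancel, energy_succ_of_selfAffine (fun i => (hh i).2) hfh n,
    energy_succ_of_selfAffine (fun i => (hh i).2) hfh 0]
  ring

/-- energy recursion for an FIF:
`E_m(f) = (5/3)(d₁²+d₂²+d₃²)(E_{m-1}(f) - E₀(f)) + E₁(f)` for `m ≥ 1`. -/
theorem stmt_3 (q : Fin 3 → Pt) (hq : AffineIndependent ℝ q)
    (d : Fin 3 → ℝ) (hd : ∀ i, d i ∈ Set.Ioo (-1 : ℝ) 1)
    (f : Pt → ℝ) (hf : IsFIF q d f) :
    ∀ m : ℕ, 1 ≤ m →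
      energy q m f =
        (5/3) * ((d 0)^2 + (d 1)^2 + (d 2)^2) * (energy q (m-1) f - energy q 0 f)
          + energy q 1 f :=
  stmt_3_general q d f hf

end
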